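/- arXiv:1406.1256 — 2 statements merged into one kernel-verified Lean document; each statement's English description precedes it below -/
import Mathlib

section
/- (Universal exponential stabilization by state feedback with a constant metric.) Let f : ℝⁿ → ℝⁿ be continuously differentiable with Jacobian A(x) = ∂f/∂x(x), B an n×m real matrix, W a symmetric positive definite n×n real matrix, λ > 0 and ρ ≥ 0 real numbers, and suppose W·A(x)ᵀ + A(x)·W - ρ·B·Bᵀ ⪯ -2λW for all x ∈ ℝⁿ. Define K = -(ρ/2)·Bᵀ·W⁻¹. Then for every continuous u⋆ : [0,∞) → ℝᵐ, every solution x⋆ of ẋ⋆ = f(x⋆) + B·u⋆(t) on [0,∞), and every solution x of the closed-loop system ẋ = f(x) + B·(u⋆(t) + K·(x - x⋆(t))) on [0,∞), one has (x(t)-x⋆(t))ᵀ·W⁻¹·(x(t)-x⋆(t)) ≤ e^{-2λt}·(x(0)-x⋆(0))ᵀ·W⁻¹·(x(0)-x⋆(0)) for all t ≥ 0; in particular every feasible target trajectory is globally exponentially stabilized with rate λ. -/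
/-!
Write `M = W⁻¹` and `F y = f y + B K y`, so that the error `e = x - x⋆` solves
`e' = F x - F x⋆` (the input `u⋆` cancels). With `K = -(ρ/2) Bᵀ W⁻¹`, the symmetric part of
`(A y + B K) W` is `W A(y)ᵀ + A(y) W - ρ B Bᵀ`, so after the substitution `e = W v` the LMI
reads `2 (M e)ᵀ (A y + B K) e ≤ -2λ eᵀ M e`. The mean value theorem along the segment from
`x⋆` to `x` carries this bound over to the increment `F x - F x⋆`, hence `V = eᵀ M e` satisfies
`V' ≤ -2λ V`, and Grönwall's inequality gives `V t ≤ e^{-2λt} V 0`.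
-/

open Matrix

theorem le_exp_mul_of_hasDerivAt_le_mul {V V' : ℝ → ℝ} {K : ℝ}
    (hV : ∀ t, 0 ≤ t → HasDerivAt V (V' t) t) (hV' : ∀ t, 0 ≤ t → V' t ≤ K * V t) (t : ℝ)
    (ht : 0 ≤ t) : V t ≤ Real.exp (K * t) * V 0 := by
  have := le_gronwallBound_of_liminf_deriv_right_le (a := 0) (b := t) (δ := V 0) (ε := 0)
    (fun s hs => (hV s hs.1).continuousAt.continuousWithinAt)
    (fun s hs r hr => by
      simpa [slope_def_field, div_eq_inv_mul] using
        (hV s hs.1).hasDerivWithinAt.liminf_right_slope_le hr)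
    le_rfl (fun s hs => by simpa using hV' s hs.1) t ⟨ht, le_rfl⟩
  simpa [gronwallBound_ε0, mul_comm] using this

section

variable {ι κ : Type*} [Fintype ι] [Fintype κ]

theorem HasDerivAt.dotProduct {u v : ℝ → ι → ℝ} {u' v' : ι → ℝ} {t : ℝ} (hu : HasDerivAt u u' t)
    (hv : HasDerivAt v v' t) :
    HasDerivAt (fun s => u s ⬝ᵥ v s) (u' ⬝ᵥ v t + u t ⬝ᵥ v') t := by
  simp only [_root_.dotProduct, ← Finset.sum_add_distrib]
  exact HasDerivAt.fun_sum fun i _ => (hasDerivAt_pi.1 hu i).mul (hasDerivAt_pi.1 hv i)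

theorem HasDerivAt.dotProduct_mulVec_self {M : Matrix ι ι ℝ} (hM : M.IsSymm) {u : ℝ → ι → ℝ}
    {u' : ι → ℝ} {t : ℝ} (hu : HasDerivAt u u' t) :
    HasDerivAt (fun s => u s ⬝ᵥ M *ᵥ u s) (2 * (M *ᵥ u t ⬝ᵥ u')) t := by
  have hMu : HasDerivAt (fun s => M *ᵥ u s) (M *ᵥ u') t := by
    simpa [Function.comp_def] using
      (mulVecLin M).toContinuousLinearMap.hasFDerivAt.comp_hasDerivAt t hu
  convert hu.dotProduct hMu using 1
  rw [dotProduct_mulVec (u t), ← mulVec_transpose, hM.eq, dotProduct_comm u']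
  ring

theorem dotProduct_add_transpose_mulVec_self (N : Matrix ι ι ℝ) (v : ι → ℝ) :
    v ⬝ᵥ (N + Nᵀ) *ᵥ v = 2 * (v ⬝ᵥ N *ᵥ v) := by
  rw [add_mulVec, dotProduct_add, dotProduct_mulVec v Nᵀ, vecMul_transpose, dotProduct_comm]
  ring

theorem dotProduct_sub_le_of_hasFDerivAt [DecidableEq ι] {F : (ι → ℝ) → κ → ℝ}
    {J : (ι → ℝ) → Matrix κ ι ℝ}
    (hF : ∀ y, HasFDerivAt F (toLin' (J y)).toContinuousLinearMap y) (w : κ → ℝ) (a b : ι → ℝ)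
    {c : ℝ} (hJ : ∀ y, w ⬝ᵥ J y *ᵥ (a - b) ≤ c) : w ⬝ᵥ (F a - F b) ≤ c := by
  have hwF : ∀ y, HasFDerivAt (fun y => w ⬝ᵥ F y)
      ((dotProductBilin ℝ ℝ w).toContinuousLinearMap.comp
        (toLin' (J y)).toContinuousLinearMap) y :=
    fun y => (dotProductBilin ℝ ℝ w).toContinuousLinearMap.hasFDerivAt.comp y (hF y)
  obtain ⟨z, -, hz⟩ := domain_mvt (fun y _ => (hwF y).hasFDerivWithinAt) convex_univ
    (Set.mem_univ b) (Set.mem_univ a)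
  simpa [dotProduct_sub, hz] using hJ z

theorem two_mul_dotProduct_closedLoop_le [DecidableEq ι] {W A : Matrix ι ι ℝ} {B : Matrix ι κ ℝ}
    (hW : W.PosDef) {lam ρ : ℝ}
    (hLMI : ((-(2 * lam)) • W - (W * Aᵀ + A * W - ρ • (B * Bᵀ))).PosSemidef) (e : ι → ℝ) :
    2 * (W⁻¹ *ᵥ e ⬝ᵥ (A + B * (-(ρ / 2)) • (Bᵀ * W⁻¹)) *ᵥ e) ≤
      -(2 * lam) * (e ⬝ᵥ W⁻¹ *ᵥ e) := by
  have hdet : IsUnit W.det := isUnit_iff_ne_zero.2 hW.det_pos.ne'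
  have hWsymm : W.IsSymm := isHermitian_iff_isSymm.1 hW.isHermitian
  obtain ⟨v, rfl⟩ : ∃ v, e = W *ᵥ v :=
    ⟨W⁻¹ *ᵥ e, by rw [mulVec_mulVec, mul_nonsing_inv _ hdet, one_mulVec]⟩
  have hKW : (-(ρ / 2)) • (Bᵀ * W⁻¹) * W = (-(ρ / 2)) • Bᵀ := by
    rw [Matrix.smul_mul, Matrix.mul_assoc, nonsing_inv_mul _ hdet, Matrix.mul_one]
  have hsymmetrized : (A + B * (-(ρ / 2)) • (Bᵀ * W⁻¹)) * W +
      ((A + B * (-(ρ / 2)) • (Bᵀ * W⁻¹)) * W)ᵀ = W * Aᵀ + A * W - ρ • (B * Bᵀ) := by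
    rw [Matrix.add_mul, Matrix.mul_assoc B, hKW, transpose_add, transpose_mul, hWsymm.eq,
      transpose_mul, transpose_smul, transpose_transpose, Matrix.mul_smul, Matrix.smul_mul]
    module
  calc 2 * (W⁻¹ *ᵥ (W *ᵥ v) ⬝ᵥ (A + B * (-(ρ / 2)) • (Bᵀ * W⁻¹)) *ᵥ (W *ᵥ v))
      = v ⬝ᵥ (W * Aᵀ + A * W - ρ • (B * Bᵀ)) *ᵥ v := by
        rw [← hsymmetrized, dotProduct_add_transpose_mulVec_self]
        simp only [mulVec_mulVec, nonsing_inv_mul _ hdet, one_mulVec]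
    _ ≤ -(2 * lam) * (v ⬝ᵥ W *ᵥ v) := by
        have hpsd := hLMI.dotProduct_mulVec_nonneg v
        simp only [star_trivial, sub_mulVec, smul_mulVec, dotProduct_sub, dotProduct_smul,
          smul_eq_mul] at hpsd ⊢
        linarith
    _ = -(2 * lam) * (W *ᵥ v ⬝ᵥ W⁻¹ *ᵥ (W *ᵥ v)) := by
        rw [mulVec_mulVec, nonsing_inv_mul _ hdet, one_mulVec, dotProduct_comm]

end

theorem universal_stabilization_constant_metric_general {n m : ℕ}
    (f : (Fin n → ℝ) → (Fin n → ℝ))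
    (A : (Fin n → ℝ) → Matrix (Fin n) (Fin n) ℝ)
    (hf : ∀ x : Fin n → ℝ,
      HasFDerivAt f ((Matrix.toLin' (A x)).toContinuousLinearMap) x)
    (B : Matrix (Fin n) (Fin m) ℝ)
    (W : Matrix (Fin n) (Fin n) ℝ) (hW : W.PosDef)
    (lam ρ : ℝ)
    (hLMI : ∀ x : Fin n → ℝ,
      ((-(2 * lam)) • W - (W * (A x)ᵀ + A x * W - ρ • (B * Bᵀ))).PosSemidef)
    (K : Matrix (Fin m) (Fin n) ℝ) (hK : K = (-(ρ / 2)) • (Bᵀ * W⁻¹))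
    (ustar : ℝ → (Fin m → ℝ))
    (xstar x : ℝ → (Fin n → ℝ))
    (hxstar : ∀ t : ℝ, 0 ≤ t →
      HasDerivAt xstar (f (xstar t) + B.mulVec (ustar t)) t)
    (hx : ∀ t : ℝ, 0 ≤ t →
      HasDerivAt x (f (x t) + B.mulVec (ustar t + K.mulVec (x t - xstar t))) t) :
    ∀ t : ℝ, 0 ≤ t →
      (x t - xstar t) ⬝ᵥ W⁻¹.mulVec (x t - xstar t) ≤
        Real.exp (-(2 * lam) * t) * ((x 0 - xstar 0) ⬝ᵥ W⁻¹.mulVec (x 0 - xstar 0)) := by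
  let F : (Fin n → ℝ) → Fin n → ℝ := fun y => f y + B *ᵥ (K *ᵥ y)
  have hF : ∀ y, HasFDerivAt F (toLin' (A y + B * K)).toContinuousLinearMap y := fun y => by
    simpa [F, map_add, ← mulVec_mulVec] using
      (hf y).add (toLin' (B * K)).toContinuousLinearMap.hasFDerivAt
  have hF_contracting : ∀ a b, 2 * (W⁻¹ *ᵥ (a - b) ⬝ᵥ (F a - F b)) ≤
      -(2 * lam) * ((a - b) ⬝ᵥ W⁻¹ *ᵥ (a - b)) := fun a b => by
    have := dotProduct_sub_le_of_hasFDerivAt hF (W⁻¹ *ᵥ (a - b)) a b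
      (c := -lam * ((a - b) ⬝ᵥ W⁻¹ *ᵥ (a - b))) fun y => by
        rw [hK]
        linarith [two_mul_dotProduct_closedLoop_le hW (hLMI y) (a - b)]
    linarith
  have herror : ∀ t, 0 ≤ t → HasDerivAt (fun t => x t - xstar t) (F (x t) - F (xstar t)) t :=
    fun t ht => ((hx t ht).sub (hxstar t ht)).congr_deriv <| by
      simp only [F, mulVec_add, mulVec_sub]
      abel
  exact le_exp_mul_of_hasDerivAt_le_mul
    (fun t ht => (herror t ht).dotProduct_mulVec_self
      (isHermitian_iff_isSymm.1 hW.inv.isHermitian))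
    fun t _ => hF_contracting (x t) (xstar t)

/-- Universal exponential stabilization by state feedback with a constant metric: if
`WA(x)ᵀ + A(x)W - ρBBᵀ ⪯ -2λW` for all `x`, then with `K = -(ρ/2)BᵀW⁻¹` every feasible
target trajectory is globally exponentially stabilized with rate `λ`, measured in the
metric `M = W⁻¹`. -/
theorem universal_stabilization_constant_metric {n m : ℕ}
    (f : (Fin n → ℝ) → (Fin n → ℝ))
    (A : (Fin n → ℝ) → Matrix (Fin n) (Fin n) ℝ)
    (hf : ∀ x : Fin n → ℝ,
      HasFDerivAt f ((Matrix.toLin' (A x)).toContinuousLinearMap) x)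
    (hA : Continuous A)
    (B : Matrix (Fin n) (Fin m) ℝ)
    (W : Matrix (Fin n) (Fin n) ℝ) (hW : W.PosDef)
    (lam ρ : ℝ) (hlam : 0 < lam) (hρ : 0 ≤ ρ)
    (hLMI : ∀ x : Fin n → ℝ,
      ((-(2 * lam)) • W - (W * (A x)ᵀ + A x * W - ρ • (B * Bᵀ))).PosSemidef)
    (K : Matrix (Fin m) (Fin n) ℝ) (hK : K = (-(ρ / 2)) • (Bᵀ * W⁻¹))
    (ustar : ℝ → (Fin m → ℝ)) (hustar : Continuous ustar)
    (xstar x : ℝ → (Fin n → ℝ))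
    (hxstar : ∀ t : ℝ, 0 ≤ t →
      HasDerivAt xstar (f (xstar t) + B.mulVec (ustar t)) t)
    (hx : ∀ t : ℝ, 0 ≤ t →
      HasDerivAt x (f (x t) + B.mulVec (ustar t + K.mulVec (x t - xstar t))) t) :
    ∀ t : ℝ, 0 ≤ t →
      (x t - xstar t) ⬝ᵥ W⁻¹.mulVec (x t - xstar t) ≤
        Real.exp (-(2 * lam) * t) * ((x 0 - xstar 0) ⬝ᵥ W⁻¹.mulVec (x 0 - xstar 0)) :=
  universal_stabilization_constant_metric_general f A hf B W hW lam ρ hLMI K hK ustar xstar x hxstar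
    hx
end

section
/- (Observer certificate for the Moore–Greitzer jet engine model.) Let A(x) = [[-3φ - (3/2)φ², -1], [1, 0]] for x = (φ, ψ) ∈ ℝ² and C = [0, 1] (a 1×2 matrix, corresponding to measuring ψ only). There exist a symmetric positive definite 2×2 real matrix W with 0.1·I ⪯ W ⪯ 1.3·I and a polynomial function ρ : ℝ² → ℝ with ρ(x) ≥ 0 for all x, such that for all x ∈ ℝ²: A(x)ᵀ·W + W·A(x) - ρ(x)·Cᵀ·C ⪯ -0.2·W. (This is the pointwise observer LMI with contraction rate λ = 0.1 for the Moore–Greitzer surge dynamics φ̇ = -ψ - (3/2)φ² - (1/2)φ³, ψ̇ = φ + u, whose Jacobian is A(x).) -/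
/-!
With `W = !![0.2, -0.33; -0.33, 1.2]` the residual `-0.2 W - (AᵀW + WA - ρ CᵀC)` is
`!![0.6 (φ + 1)² + 0.02, -t; -t, ρ - 0.9]` with `t = 0.495 φ² + 0.99 φ + 0.934`
(`mooreGreitzerCoupling`).
Its top-left entry is at least `0.02`, so by the Schur complement the residual is positive
semidefinite as soon as `ρ - 0.9 ≥ t² / 0.02 = 50 t²`; take `ρ = 0.9 + 50 t²`.
-/

open Matrix

/-- The Jacobian of the Moore–Greitzer surge dynamics. -/
noncomputable def mooreGreitzerA (x : Fin 2 → ℝ) : Matrix (Fin 2) (Fin 2) ℝ :=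
  !![-3 * x 0 - (3 / 2) * (x 0) ^ 2, -1; 1, 0]

/-- The output matrix of the Moore–Greitzer surge dynamics (measuring `ψ` only). -/
noncomputable def mooreGreitzerC : Matrix (Fin 1) (Fin 2) ℝ := !![0, 1]

open MvPolynomial

theorem Matrix.posSemidef_of_fin_two {a b d : ℝ} (ha : 0 ≤ a) (hd : 0 ≤ d)
    (hb : b ^ 2 ≤ a * d) : (!![a, b; b, d] : Matrix (Fin 2) (Fin 2) ℝ).PosSemidef := by
  refine posSemidef_iff_dotProduct_mulVec.mpr ⟨?_, fun v => ?_⟩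
  · ext i j
    fin_cases i <;> fin_cases j <;> rfl
  · simp only [dotProduct, mulVec, Fin.sum_univ_two, star_trivial, of_apply, cons_val_zero,
      cons_val_one, cons_val_fin_one]
    set Q := v 0 * (a * v 0 + b * v 1) + v 1 * (b * v 0 + d * v 1)
    have haQ : 0 ≤ a * Q := by
      nlinarith [sq_nonneg (a * v 0 + b * v 1), mul_nonneg (sub_nonneg.2 hb) (sq_nonneg (v 1))]
    have hdQ : 0 ≤ d * Q := by
      nlinarith [sq_nonneg (d * v 1 + b * v 0), mul_nonneg (sub_nonneg.2 hb) (sq_nonneg (v 0))]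
    rcases (add_nonneg ha hd).eq_or_lt with had | had
    · obtain ⟨rfl, rfl⟩ : a = 0 ∧ d = 0 := ⟨by linarith, by linarith⟩
      obtain rfl : b = 0 := by nlinarith
      simp [Q]
    · exact (mul_nonneg_iff_of_pos_left had).1 (by linarith)

noncomputable def mooreGreitzerW : Matrix (Fin 2) (Fin 2) ℝ := !![0.2, -0.33; -0.33, 1.2]

noncomputable def mooreGreitzerCoupling : MvPolynomial (Fin 2) ℝ :=
  C 0.495 * X 0 ^ 2 + C 0.99 * X 0 + C 0.934

noncomputable def mooreGreitzerRho : MvPolynomial (Fin 2) ℝ :=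
  C 0.9 + C 50 * mooreGreitzerCoupling ^ 2

theorem eval_mooreGreitzerCoupling (x : Fin 2 → ℝ) :
    eval x mooreGreitzerCoupling = 0.495 * x 0 ^ 2 + 0.99 * x 0 + 0.934 := by
  simp [mooreGreitzerCoupling]

theorem eval_mooreGreitzerRho (x : Fin 2 → ℝ) :
    eval x mooreGreitzerRho = 0.9 + 50 * eval x mooreGreitzerCoupling ^ 2 := by
  simp [mooreGreitzerRho]

theorem mooreGreitzerW_sub_posSemidef :
    (mooreGreitzerW - (0.1 : ℝ) • (1 : Matrix (Fin 2) (Fin 2) ℝ)).PosSemidef := by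
  have h : mooreGreitzerW - (0.1 : ℝ) • (1 : Matrix (Fin 2) (Fin 2) ℝ) =
      !![0.1, -0.33; -0.33, 1.1] := by
    ext i j
    fin_cases i <;> fin_cases j <;> norm_num [mooreGreitzerW]
  rw [h]
  exact posSemidef_of_fin_two (by norm_num) (by norm_num) (by norm_num)

theorem sub_mooreGreitzerW_posSemidef :
    ((1.3 : ℝ) • (1 : Matrix (Fin 2) (Fin 2) ℝ) - mooreGreitzerW).PosSemidef := by
  have h : (1.3 : ℝ) • (1 : Matrix (Fin 2) (Fin 2) ℝ) - mooreGreitzerW =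
      !![1.1, 0.33; 0.33, 0.1] := by
    ext i j
    fin_cases i <;> fin_cases j <;> norm_num [mooreGreitzerW]
  rw [h]
  exact posSemidef_of_fin_two (by norm_num) (by norm_num) (by norm_num)

theorem mooreGreitzerW_posDef : mooreGreitzerW.PosDef := by
  simpa using PosDef.posSemidef_add mooreGreitzerW_sub_posSemidef
    (PosDef.one.smul (by norm_num : (0 : ℝ) < 0.1))

theorem mooreGreitzer_residual_eq (x : Fin 2 → ℝ) (r : ℝ) :
    (-(0.2 : ℝ)) • mooreGreitzerW -
        ((mooreGreitzerA x)ᵀ * mooreGreitzerW + mooreGreitzerW * mooreGreitzerA x -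
          r • (mooreGreitzerCᵀ * mooreGreitzerC)) =
      !![0.6 * (x 0 + 1) ^ 2 + 0.02, -eval x mooreGreitzerCoupling;
        -eval x mooreGreitzerCoupling, r - 0.9] := by
  ext i j
  fin_cases i <;> fin_cases j <;>
    simp [mooreGreitzerA, mooreGreitzerC, mooreGreitzerW, eval_mooreGreitzerCoupling, mul_apply,
      Fin.sum_univ_two] <;> ring

theorem mooreGreitzer_residual_posSemidef (x : Fin 2 → ℝ) :
    ((-(0.2 : ℝ)) • mooreGreitzerW -
        ((mooreGreitzerA x)ᵀ * mooreGreitzerW + mooreGreitzerW * mooreGreitzerA x -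
          eval x mooreGreitzerRho • (mooreGreitzerCᵀ * mooreGreitzerC))).PosSemidef := by
  rw [mooreGreitzer_residual_eq, eval_mooreGreitzerRho, add_sub_cancel_left]
  set t := eval x mooreGreitzerCoupling
  refine posSemidef_of_fin_two (by positivity) (by positivity) ?_
  nlinarith [mul_nonneg (sq_nonneg t) (sq_nonneg (x 0 + 1))]

/-- Observer certificate for the Moore–Greitzer jet engine model: there exist a constant
metric `W` with `0.1·I ⪯ W ⪯ 1.3·I` and a nonnegative polynomial multiplier `ρ`
satisfying the pointwise observer LMI with contraction rate `λ = 0.1`. -/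
theorem mooreGreitzer_observer_certificate :
    ∃ (W : Matrix (Fin 2) (Fin 2) ℝ) (ρ : MvPolynomial (Fin 2) ℝ),
      W.PosDef ∧
      (W - (0.1 : ℝ) • (1 : Matrix (Fin 2) (Fin 2) ℝ)).PosSemidef ∧
      ((1.3 : ℝ) • (1 : Matrix (Fin 2) (Fin 2) ℝ) - W).PosSemidef ∧
      (∀ x : Fin 2 → ℝ, 0 ≤ MvPolynomial.eval x ρ) ∧
      (∀ x : Fin 2 → ℝ,
        ((-(0.2 : ℝ)) • W -
          ((mooreGreitzerA x)ᵀ * W + W * mooreGreitzerA x -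
            MvPolynomial.eval x ρ • (mooreGreitzerCᵀ * mooreGreitzerC))).PosSemidef) :=
  ⟨mooreGreitzerW, mooreGreitzerRho, mooreGreitzerW_posDef, mooreGreitzerW_sub_posSemidef,
    sub_mooreGreitzerW_posSemidef, fun x => by rw [eval_mooreGreitzerRho]; positivity,
    mooreGreitzer_residual_posSemidef⟩
end
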